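/- Let M be a pointed metric space, p ≠ q ∈ M with [p,q] = {p,q}, and let f_{pq} be the magic function. If μ = Σᵢ aᵢ m_{pᵢqᵢ} is a finitely supported element of F(M) with Σᵢ |aᵢ| ≤ 1 and ⟨μ, f_{pq}⟩ = 1, then μ = m_{pq}. In particular, f_{pq} exposes m_{pq} among finitely supported elements of the unit ball. -/

import Mathlib

noncomputable section

open Metric Set

/-- The space of real-valued Lipschitz functions on `M` vanishing at `base`. -/
structure Lip0 (M : Type*) [MetricSpace M] (base : M) where
  toFun : M → ℝ
  exists_lip' : ∃ K, LipschitzWith K toFun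
  map_base' : toFun base = 0

namespace Lip0

variable {M : Type*} [MetricSpace M] {base : M}

instance : FunLike (Lip0 M base) M ℝ where
  coe := toFun
  coe_injective := by rintro ⟨f, _, _⟩ ⟨g, _, _⟩ h; simpa using h

@[simp] lemma map_base (f : Lip0 M base) : f base = 0 := f.map_base'

/-- The set of (nonnegative real) Lipschitz constants of `f`. -/
def lipSet (f : Lip0 M base) : Set ℝ :=
  {K | 0 ≤ K ∧ ∀ x y, |f x - f y| ≤ K * dist x y}

lemma lipSet_nonempty (f : Lip0 M base) : (lipSet f).Nonempty := by
  obtain ⟨K, hK⟩ := f.exists_lip'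
  exact ⟨K, K.coe_nonneg, fun x y => by
    have h := hK.dist_le_mul x y; rw [Real.dist_eq] at h; exact h⟩

lemma lipSet_bddBelow (f : Lip0 M base) : BddBelow (lipSet f) :=
  ⟨0, fun K hK => hK.1⟩

lemma sInf_mem_lipSet (f : Lip0 M base) : sInf (lipSet f) ∈ lipSet f := by
  constructor
  · exact le_csInf (lipSet_nonempty f) fun K hK => hK.1
  · intro x y
    rcases eq_or_ne x y with rfl | hxy
    · simp
    · have hd : 0 < dist x y := dist_pos.2 hxy
      rw [← div_le_iff₀ hd]
      exact le_csInf (lipSet_nonempty f) fun K hK => (div_le_iff₀ hd).2 (hK.2 x y)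

instance : Zero (Lip0 M base) :=
  ⟨⟨fun _ => 0, ⟨0, LipschitzWith.const 0⟩, rfl⟩⟩

instance : Add (Lip0 M base) :=
  ⟨fun f g => ⟨fun t => f t + g t, by
    obtain ⟨Kf, hf⟩ := f.exists_lip'; obtain ⟨Kg, hg⟩ := g.exists_lip'
    exact ⟨Kf + Kg, hf.add hg⟩, by simp⟩⟩

instance : Neg (Lip0 M base) :=
  ⟨fun f => ⟨fun t => -f t, by
    obtain ⟨Kf, hf⟩ := f.exists_lip'
    exact ⟨Kf, hf.neg⟩, by simp⟩⟩

def rsmul (c : ℝ) (f : Lip0 M base) : Lip0 M base :=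
  ⟨fun t => c * f t, by
    obtain ⟨Kf, hf⟩ := f.exists_lip'
    refine ⟨⟨|c|, abs_nonneg c⟩ * Kf, LipschitzWith.of_dist_le_mul fun x y => ?_⟩
    have h1 : dist (c * f x) (c * f y) = |c| * |f x - f y| := by
      rw [Real.dist_eq, ← abs_mul, mul_sub]
    have h2 := hf.dist_le_mul x y
    rw [Real.dist_eq] at h2
    rw [h1]
    calc |c| * |f x - f y| ≤ |c| * (Kf * dist x y) :=
          mul_le_mul_of_nonneg_left h2 (abs_nonneg c)
      _ = (⟨|c|, abs_nonneg c⟩ * Kf : NNReal) * dist x y := by show _ = (|c| * (Kf : ℝ)) * dist x y; ring, by simp⟩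

instance : SMul ℝ (Lip0 M base) := ⟨rsmul⟩
instance : SMul ℕ (Lip0 M base) := ⟨fun n => rsmul (n : ℝ)⟩
instance : SMul ℤ (Lip0 M base) := ⟨fun n => rsmul (n : ℝ)⟩
instance : Sub (Lip0 M base) := ⟨fun f g => f + -g⟩

@[simp] lemma coe_zero : ⇑(0 : Lip0 M base) = fun _ => 0 := rfl
@[simp] lemma coe_add (f g : Lip0 M base) : ⇑(f + g) = fun t => f t + g t := rfl
@[simp] lemma coe_neg (f : Lip0 M base) : ⇑(-f) = fun t => -f t := rfl
@[simp] lemma coe_smul (c : ℝ) (f : Lip0 M base) : ⇑(c • f) = fun t => c * f t := rfl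
@[simp] lemma coe_sub (f g : Lip0 M base) : ⇑(f - g) = fun t => f t - g t := by
  show (fun t => f t + -(g t)) = _
  funext t; ring

instance : AddCommGroup (Lip0 M base) :=
  (DFunLike.coe_injective (F := Lip0 M base)).addCommGroup _
    rfl (fun _ _ => rfl) (fun _ => rfl) (fun f g => coe_sub f g)
    (fun f n => by funext t; show (n : ℝ) * f t = n • f t; simp)
    (fun f n => by funext t; show (n : ℝ) * f t = n • f t; simp)

instance : Module ℝ (Lip0 M base) :=
  (DFunLike.coe_injective (F := Lip0 M base)).module ℝ
    { toFun := fun f : Lip0 M base => ⇑f, map_zero' := rfl, map_add' := fun _ _ => rfl }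
    (fun _ _ => rfl)

lemma lipSet_neg (f : Lip0 M base) : lipSet (-f) = lipSet f := by
  unfold lipSet
  ext K
  have e : ∀ x y : M, (-f) x - (-f) y = -(f x - f y) := fun x y => by
    show -f x - -f y = -(f x - f y); ring
  constructor <;> rintro ⟨h0, h⟩ <;> refine ⟨h0, fun x y => ?_⟩
  · have := h x y; rwa [e, abs_neg] at this
  · rw [e, abs_neg]; exact h x y

instance : NormedAddCommGroup (Lip0 M base) :=
  AddGroupNorm.toNormedAddCommGroup
  { toFun := fun f => sInf (lipSet f)
    map_zero' := by
      apply le_antisymm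
      · exact csInf_le (lipSet_bddBelow _) ⟨le_refl 0, fun x y => by simp⟩
      · exact (sInf_mem_lipSet (0 : Lip0 M base)).1
    add_le' := fun f g => by
      apply csInf_le (lipSet_bddBelow _)
      refine ⟨add_nonneg (sInf_mem_lipSet f).1 (sInf_mem_lipSet g).1, fun x y => ?_⟩
      have hf := (sInf_mem_lipSet f).2 x y
      have hg := (sInf_mem_lipSet g).2 x y
      calc |(f + g) x - (f + g) y| = |(f x - f y) + (g x - g y)| := by
            simp [coe_add]; ring_nf
        _ ≤ |f x - f y| + |g x - g y| := abs_add_le _ _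
        _ ≤ sInf (lipSet f) * dist x y + sInf (lipSet g) * dist x y := add_le_add hf hg
        _ = (sInf (lipSet f) + sInf (lipSet g)) * dist x y := by ring
    neg' := fun f => by show sInf (lipSet (-f)) = sInf (lipSet f); rw [lipSet_neg]
    eq_zero_of_map_eq_zero' := fun f hf => by
      have hf' : sInf (lipSet f) = 0 := hf
      apply DFunLike.coe_injective
      funext t
      have h := (sInf_mem_lipSet f).2 t base
      rw [hf', zero_mul] at h
      have h0 : f t - f base = 0 := abs_nonpos_iff.1 h
      show f t = (0 : Lip0 M base) t
      have : (0 : Lip0 M base) t = 0 := rfl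
      rw [this]
      simpa using h0 }

lemma norm_def (f : Lip0 M base) : ‖f‖ = sInf (lipSet f) := rfl

instance : NormedSpace ℝ (Lip0 M base) where
  norm_smul_le c f := by
    rw [norm_def, norm_def, Real.norm_eq_abs]
    apply csInf_le (lipSet_bddBelow _)
    refine ⟨mul_nonneg (abs_nonneg c) (sInf_mem_lipSet f).1, fun x y => ?_⟩
    have hf := (sInf_mem_lipSet f).2 x y
    calc |(c • f) x - (c • f) y| = |c| * |f x - f y| := by
          rw [coe_smul]; rw [← abs_mul]; ring_nf
      _ ≤ |c| * (sInf (lipSet f) * dist x y) :=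
          mul_le_mul_of_nonneg_left hf (abs_nonneg c)
      _ = |c| * sInf (lipSet f) * dist x y := by ring

lemma norm_apply_le (f : Lip0 M base) (x y : M) : |f x - f y| ≤ ‖f‖ * dist x y :=
  (sInf_mem_lipSet f).2 x y

end Lip0

open Lip0 NormedSpace

variable (M : Type*) [MetricSpace M]

/-- The Dirac evaluation functional at `x`. -/
def deltaF (base x : M) : StrongDual ℝ (Lip0 M base) :=
  LinearMap.mkContinuous
    { toFun := fun f => f x
      map_add' := fun _ _ => rfl
      map_smul' := fun _ _ => rfl }
    (dist x base)
    (fun f => by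
      have h := Lip0.norm_apply_le f x base
      simp only [Lip0.map_base, sub_zero] at h
      rw [Real.norm_eq_abs, mul_comm]; exact h)

variable {M}

@[simp] lemma deltaF_apply (base x : M) (f : Lip0 M base) : deltaF M base x f = f x := rfl

/-- The molecule `(δ x - δ y)/d(x,y)`. -/
def molecule (base x y : M) : StrongDual ℝ (Lip0 M base) :=
  (dist x y)⁻¹ • (deltaF M base x - deltaF M base y)

variable (M) in
/-- The Lipschitz-free space over `M`, realized as the closed linear span of the Dirac
evaluations inside the dual of `Lip0 M base`. -/
def FreeSpace (base : M) : Submodule ℝ (StrongDual ℝ (Lip0 M base)) :=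
  (Submodule.span ℝ (Set.range (deltaF M base))).topologicalClosure

variable (M) in
/-- The subspace of the free space generated by the Diracs of a subset `S ⊆ M`. -/
def FreeSpaceOn (base : M) (S : Set M) : Submodule ℝ (StrongDual ℝ (Lip0 M base)) :=
  (Submodule.span ℝ (deltaF M base '' S)).topologicalClosure

lemma deltaF_mem (base x : M) : deltaF M base x ∈ FreeSpace M base :=
  Submodule.le_topologicalClosure _ (Submodule.subset_span ⟨x, rfl⟩)

lemma molecule_mem (base x y : M) : molecule base x y ∈ FreeSpace M base :=
  Submodule.smul_mem _ _ (Submodule.sub_mem _ (deltaF_mem base x) (deltaF_mem base y))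

/-- The molecule as an element of the free space. -/
def mol (base x y : M) : ↥(FreeSpace M base) := ⟨molecule base x y, molecule_mem base x y⟩

/-- The "magic function" of Ivakhno, Kadets and Werner associated to the pair `(p, q)`,
with base point `o`. -/
def magicFun (o p q : M) (t : M) : ℝ :=
  (dist p q / 2) *
    ((dist t q - dist t p) / (dist t q + dist t p) -
      (dist o q - dist o p) / (dist o q + dist o p))

/-!
The magic function `f = f_{pq}` is `1`-Lipschitz: `f u - f v` equals `d(p,q)` times
`d(u,q) d(v,p) - d(u,p) d(v,q)` over `(d(u,p) + d(u,q)) (d(v,p) + d(v,q))`, and the triangle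
inequality bounds this by `d(u,v)`. Equality puts both `u` and `v` on the metric segment
`[p,q] = {p,q}`, so `⟨m_{uv}, f⟩ = 1` forces `(u,v) = (p,q)`. If `⟨Σ aᵢ m_{pᵢqᵢ}, f⟩ = 1` with
`Σ |aᵢ| ≤ 1`, every term must satisfy `aᵢ ⟨m_{pᵢqᵢ}, f⟩ = |aᵢ|`, hence `aᵢ m_{pᵢqᵢ} = |aᵢ| m_{pq}`.
-/

lemma Finset.sum_abs_eq_one_and_mul_eq_abs {ι : Type*} (s : Finset ι) {a c : ι → ℝ}
    (hc : ∀ i ∈ s, |c i| ≤ 1) (ha : ∑ i ∈ s, |a i| ≤ 1) (h : ∑ i ∈ s, a i * c i = 1) :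
    ∑ i ∈ s, |a i| = 1 ∧ ∀ i ∈ s, a i * c i = |a i| := by
  have hle : ∀ i ∈ s, a i * c i ≤ |a i| := fun i hi =>
    calc a i * c i ≤ |a i * c i| := le_abs_self _
      _ = |a i| * |c i| := abs_mul _ _
      _ ≤ |a i| := mul_le_of_le_one_right (abs_nonneg _) (hc i hi)
  have hsum : ∑ i ∈ s, |a i| = 1 :=
    le_antisymm ha (h ▸ Finset.sum_le_sum hle)
  exact ⟨hsum, (Finset.sum_eq_sum_iff_of_le hle).1 (h.trans hsum.symm)⟩

lemma Lip0.norm_le_of_abs_sub_le {base : M} (f : Lip0 M base) {K : ℝ} (hK : 0 ≤ K)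
    (hf : ∀ x y, |f x - f y| ≤ K * dist x y) : ‖f‖ ≤ K :=
  csInf_le (lipSet_bddBelow f) ⟨hK, hf⟩

lemma molecule_apply (o u v : M) (f : Lip0 M o) :
    molecule o u v f = (f u - f v) / dist u v := by
  simp [molecule, div_eq_inv_mul]

lemma molecule_swap (o u v : M) : molecule o v u = -molecule o u v := by
  ext f
  rw [neg_apply, molecule_apply, molecule_apply, dist_comm, ← neg_div, neg_sub]

lemma abs_molecule_apply_le (o u v : M) (f : Lip0 M o) : |molecule o u v f| ≤ ‖f‖ := by
  rcases eq_or_ne u v with rfl | huv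
  · simp [molecule_apply]
  · rw [molecule_apply, abs_div, abs_of_pos (dist_pos.2 huv), div_le_iff₀ (dist_pos.2 huv)]
    exact norm_apply_le f u v

section MagicFunction

variable {o p q : M}

lemma magicFun_sub (hpq : p ≠ q) (u v : M) :
    magicFun o p q u - magicFun o p q v =
      dist p q * (dist u q * dist v p - dist u p * dist v q) /
        ((dist u p + dist u q) * (dist v p + dist v q)) := by
  have hu : 0 < dist u p + dist u q :=
    (dist_pos.2 hpq).trans_le (dist_triangle_left p q u)
  have hv : 0 < dist v p + dist v q :=
    (dist_pos.2 hpq).trans_le (dist_triangle_left p q v)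
  rw [eq_div_iff (mul_pos hu hv).ne']
  unfold magicFun
  rw [add_comm (dist u p)] at hu ⊢
  rw [add_comm (dist v p)] at hv ⊢
  field_simp
  ring

omit [MetricSpace M] in
/-- Writing the left side as `d(u,q) (d(v,p) - d(u,p)) + d(u,p) (d(u,q) - d(v,q))`, each
bracket is at most `d(u,v)` by the triangle inequality. -/
lemma cross_dist_le [PseudoMetricSpace M] (u v p q : M) :
    dist u q * dist v p - dist u p * dist v q ≤ dist u v * (dist u p + dist u q) := by
  have hp : dist v p - dist u p ≤ dist u v := by
    linarith [dist_triangle v u p, dist_comm u v]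
  have hq : dist u q - dist v q ≤ dist u v := by linarith [dist_triangle u v q]
  nlinarith [mul_le_mul_of_nonneg_left hp (dist_nonneg : 0 ≤ dist u q),
    mul_le_mul_of_nonneg_left hq (dist_nonneg : 0 ≤ dist u p)]

lemma magicFun_sub_le_dist (hpq : p ≠ q) (u v : M) :
    magicFun o p q u - magicFun o p q v ≤ dist u v := by
  have hu := dist_triangle_left p q u
  have hv := dist_triangle_left p q v
  have hs : 0 < dist p q := dist_pos.2 hpq
  rw [magicFun_sub hpq, div_le_iff₀ (mul_pos (hs.trans_le hu) (hs.trans_le hv))]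
  have hX := cross_dist_le u v p q
  rcases le_or_gt (dist u q * dist v p - dist u p * dist v q) 0 with hX0 | hX0
  · have : dist p q * (dist u q * dist v p - dist u p * dist v q) ≤ 0 :=
      mul_nonpos_of_nonneg_of_nonpos hs.le hX0
    have : 0 ≤ dist u v * ((dist u p + dist u q) * (dist v p + dist v q)) := by positivity
    linarith
  · nlinarith [mul_le_mul_of_nonneg_right hv hX0.le]

lemma abs_magicFun_sub_le_dist (hpq : p ≠ q) (u v : M) :
    |magicFun o p q u - magicFun o p q v| ≤ dist u v :=
  abs_sub_le_iff.2 ⟨magicFun_sub_le_dist hpq u v, dist_comm v u ▸ magicFun_sub_le_dist hpq v u⟩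

/-- Equality in `magicFun_sub_le_dist` forces equality in both triangle inequalities
`d(p,q) ≤ d(u,p) + d(u,q)` and `d(p,q) ≤ d(v,p) + d(v,q)`, i.e. `u, v ∈ [p,q]`. -/
lemma eq_of_magicFun_sub_eq_dist (hpq : p ≠ q)
    (hseg : {z : M | dist p q = dist z p + dist z q} = {p, q}) {u v : M} (huv : u ≠ v)
    (h : magicFun o p q u - magicFun o p q v = dist u v) : u = p ∧ v = q := by
  have hu := dist_triangle_left p q u
  have hv := dist_triangle_left p q v
  have hs : 0 < dist p q := dist_pos.2 hpq
  have hr : 0 < dist u v := dist_pos.2 huv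
  rw [magicFun_sub hpq, div_eq_iff (mul_pos (hs.trans_le hu) (hs.trans_le hv)).ne'] at h
  have hXu : dist u q * dist v p - dist u p * dist v q ≤ dist u v * (dist u p + dist u q) :=
    cross_dist_le u v p q
  have hXv : dist u q * dist v p - dist u p * dist v q ≤ dist u v * (dist v p + dist v q) := by
    have := cross_dist_le v u q p
    rw [dist_comm v u] at this
    linarith
  have hX : 0 < dist u q * dist v p - dist u p * dist v q := by
    by_contra! hX
    nlinarith [mul_pos hr (mul_pos (hs.trans_le hu) (hs.trans_le hv))]
  have mem : ∀ z, dist p q = dist z p + dist z q → z = p ∨ z = q := fun z hz => by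
    have : z ∈ ({p, q} : Set M) := hseg ▸ hz
    simpa using this
  rcases mem u (by nlinarith [mul_le_mul_of_nonneg_right hu hX.le]) with hu' | hu' <;>
    rcases mem v (by nlinarith [mul_le_mul_of_nonneg_right hv hX.le]) with hv' | hv'
  · exact absurd (hu'.trans hv'.symm) huv
  · exact ⟨hu', hv'⟩
  · rw [hu', hv', dist_self, dist_comm q p] at hX
    nlinarith
  · exact absurd (hu'.trans hv'.symm) huv

variable {g : Lip0 M o}

lemma norm_le_one_of_eq_magicFun (hpq : p ≠ q) (hg : ∀ t, g t = magicFun o p q t) :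
    ‖g‖ ≤ 1 :=
  g.norm_le_of_abs_sub_le zero_le_one fun x y => by
    rw [hg, hg, one_mul]
    exact abs_magicFun_sub_le_dist hpq x y

lemma eq_of_molecule_apply_eq_one (hpq : p ≠ q)
    (hseg : {z : M | dist p q = dist z p + dist z q} = {p, q})
    (hg : ∀ t, g t = magicFun o p q t) {u v : M} (h : molecule o u v g = 1) :
    u = p ∧ v = q := by
  have huv : u ≠ v := by
    rintro rfl
    simp [molecule_apply] at h
  rw [molecule_apply, div_eq_one_iff_eq (dist_ne_zero.2 huv), hg, hg] at h
  exact eq_of_magicFun_sub_eq_dist hpq hseg huv h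

lemma smul_molecule_eq_abs_smul (hpq : p ≠ q)
    (hseg : {z : M | dist p q = dist z p + dist z q} = {p, q})
    (hg : ∀ t, g t = magicFun o p q t) {a : ℝ} {u v : M}
    (h : a * molecule o u v g = |a|) : a • molecule o u v = |a| • molecule o p q := by
  rcases lt_trichotomy a 0 with ha | rfl | ha
  · rw [abs_of_neg ha, ← mul_neg_one, mul_right_inj' ha.ne] at h
    have h' : molecule o v u g = 1 := by rw [molecule_swap, neg_apply, h, neg_neg]
    obtain ⟨rfl, rfl⟩ := eq_of_molecule_apply_eq_one hpq hseg hg h'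
    rw [abs_of_neg ha, molecule_swap, smul_neg, ← neg_smul]
  · simp
  · rw [abs_of_pos ha] at h
    obtain ⟨rfl, rfl⟩ :=
      eq_of_molecule_apply_eq_one hpq hseg hg ((mul_eq_left₀ ha.ne').1 h)
    rw [abs_of_pos ha]

end MagicFunction

theorem stmt_17_general {M : Type*} [MetricSpace M] (o p q : M) (hpq : p ≠ q)
    (hseg : {z : M | dist p q = dist z p + dist z q} = {p, q})
    (g : Lip0 M o) (hg : ∀ t, g t = magicFun o p q t)
    (n : ℕ) (a : Fin n → ℝ) (ps qs : Fin n → M)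
    (μ : StrongDual ℝ (Lip0 M o)) (hμ : μ = ∑ i, a i • molecule o (ps i) (qs i))
    (ha : ∑ i, |a i| ≤ 1) (hpair : μ g = 1) :
    μ = molecule o p q := by
  have hpair' : ∑ i, a i * molecule o (ps i) (qs i) g = 1 := by
    simpa [hμ] using hpair
  obtain ⟨hsum, hterm⟩ := Finset.univ.sum_abs_eq_one_and_mul_eq_abs
    (fun i _ => (abs_molecule_apply_le o (ps i) (qs i) g).trans
      (norm_le_one_of_eq_magicFun hpq hg)) ha hpair'
  calc μ = ∑ i, |a i| • molecule o p q := by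
        rw [hμ]
        exact Finset.sum_congr rfl fun i hi =>
          smul_molecule_eq_abs_smul hpq hseg hg (hterm i hi)
    _ = molecule o p q := by rw [← Finset.sum_smul, hsum, one_smul]

/-- If `[p,q] = {p,q}`, then the magic function exposes `m_{pq}` among finitely supported
elements of the unit ball: any `μ = Σᵢ aᵢ m_{pᵢqᵢ}` with `Σ|aᵢ| ≤ 1` and `⟨μ, f_{pq}⟩ = 1`
equals `m_{pq}`. -/
theorem stmt_17 {M : Type*} [MetricSpace M] (o p q : M) (hpq : p ≠ q)
    (hseg : {z : M | dist p q = dist z p + dist z q} = {p, q})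
    (g : Lip0 M o) (hg : ∀ t, g t = magicFun o p q t)
    (n : ℕ) (a : Fin n → ℝ) (ps qs : Fin n → M) (hne : ∀ i, ps i ≠ qs i)
    (μ : StrongDual ℝ (Lip0 M o)) (hμ : μ = ∑ i, a i • molecule o (ps i) (qs i))
    (ha : ∑ i, |a i| ≤ 1) (hpair : μ g = 1) :
    μ = molecule o p q :=
  stmt_17_general o p q hpq hseg g hg n a ps qs μ hμ ha hpair
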